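/- arXiv:2601.22520 — 5 statements merged into one kernel-verified Lean document; each statement's English description precedes it below -/
import Mathlib

section
/- Let f ∈ C¹((0,∞)) ∩ C([0,∞)) be positive on (0,∞) with f nondecreasing on (0,∞), and suppose F(u) := ∫_u^∞ dτ/f(τ) is finite for all u > 0. If the limit q := lim_{ξ→∞} f'(ξ)F(ξ) exists, then q ≥ 1. -/
open MeasureTheory Filter Set

/-! With `G = f F` one has `G' = f' F - 1`, which tends to `q - 1`. If `q < 1`, then `G'` is
eventually bounded by a negative constant, so `G → -∞`; but `G ≥ 0` because `f > 0` and
`F ≥ 0`. -/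

section TailIntegral

variable {g : ℝ → ℝ} {a x : ℝ}

theorem integral_Ioi_eq_sub_intervalIntegral (hg : IntegrableOn g (Ioi a)) (hx : a ≤ x) :
    ∫ τ in Ioi x, g τ = (∫ τ in Ioi a, g τ) - ∫ τ in a..x, g τ := by
  rw [intervalIntegral.integral_of_le hx, ← Ioc_union_Ioi_eq_Ioi hx,
    setIntegral_union (Ioc_disjoint_Ioi le_rfl) measurableSet_Ioi
      (hg.mono_set Ioc_subset_Ioi_self) (hg.mono_set (Ioi_subset_Ioi hx))]
  ring

theorem hasDerivAt_integral_Ioi (hg : IntegrableOn g (Ioi a)) (hx : a < x)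
    (hgx : ContinuousAt g x) : HasDerivAt (fun u => ∫ τ in Ioi u, g τ) (-g x) x := by
  have hint : IntervalIntegrable g volume a x :=
    (intervalIntegrable_iff_integrableOn_Ioc_of_le hx.le).2 (hg.mono_set Ioc_subset_Ioi_self)
  have hmeas : StronglyMeasurableAtFilter g (nhds x) :=
    ⟨Ioi a, Ioi_mem_nhds hx, hg.aestronglyMeasurable⟩
  refine ((intervalIntegral.integral_hasDerivAt_right hint hmeas hgx).const_sub
    (∫ τ in Ioi a, g τ)).congr_of_eventuallyEq ?_
  filter_upwards [Ioi_mem_nhds hx] with u hu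
  exact integral_Ioi_eq_sub_intervalIntegral hg hu.le

end TailIntegral

theorem tendsto_atBot_of_tendsto_deriv_neg {G G' : ℝ → ℝ} {a L : ℝ}
    (hG : ∀ x > a, HasDerivAt G (G' x) x) (hG' : Tendsto G' atTop (nhds L)) (hL : L < 0) :
    Tendsto G atTop atBot := by
  obtain ⟨M, hM⟩ := eventually_atTop.1 (hG'.eventually_le_const (by linarith : L < L / 2))
  set b := max M (a + 1)
  have hGb : ∀ x ∈ Ici b, HasDerivAt G (G' x) x := fun x hx =>
    hG x (by linarith [le_max_right M (a + 1), mem_Ici.1 hx])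
  have hderiv_le : ∀ x ∈ interior (Ici b), deriv G x ≤ L / 2 := fun x hx => by
    rw [(hGb x (interior_subset hx)).deriv]
    exact hM x (le_trans (le_max_left M (a + 1)) (interior_subset hx))
  have hlin : ∀ x ≥ b, G x - G b ≤ L / 2 * (x - b) := fun x hx =>
    (convex_Ici b).image_sub_le_mul_sub_of_deriv_le
      (fun y hy => (hGb y hy).continuousAt.continuousWithinAt)
      (fun y hy => (hGb y (interior_subset hy)).differentiableAt.differentiableWithinAt)
      hderiv_le b self_mem_Ici x hx hx
  refine tendsto_atBot_mono' atTop ?_ (tendsto_atBot_add_const_left atTop (G b)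
    ((tendsto_atTop_add_const_right atTop (-b) tendsto_id).const_mul_atTop_of_neg
      (by linarith : L / 2 < 0)))
  filter_upwards [eventually_ge_atTop b] with x hx
  show G x ≤ G b + L / 2 * (x + -b)
  linarith [hlin x hx]

theorem statement0_general (f f' : ℝ → ℝ) (q : ℝ)
    (hf_diff : ∀ x > 0, HasDerivAt f (f' x) x)
    (hf_pos : ∀ x > 0, 0 < f x)
    (F : ℝ → ℝ) (hF : ∀ u, F u = ∫ τ in Set.Ioi u, 1 / f τ)
    (hF_fin : ∀ u > 0, IntegrableOn (fun τ => 1 / f τ) (Set.Ioi u))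
    (hq : Tendsto (fun ξ => f' ξ * F ξ) atTop (nhds q)) :
    1 ≤ q := by
  by_contra! hq1
  have hF_deriv : ∀ x > 0, HasDerivAt F (-(1 / f x)) x := fun x hx =>
    funext hF ▸ hasDerivAt_integral_Ioi (hF_fin (x / 2) (by linarith)) (by linarith)
      (continuousAt_const.div (hf_diff x hx).continuousAt (hf_pos x hx).ne')
  have hG_deriv : ∀ x > 0, HasDerivAt (fun y => f y * F y) (f' x * F x - 1) x := by
    intro x hx
    have h := (hf_diff x hx).mul (hF_deriv x hx)
    rwa [mul_neg, mul_one_div_cancel (hf_pos x hx).ne', ← sub_eq_add_neg] at h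
  have hG_nonneg : ∀ x > 0, 0 ≤ f x * F x := fun x hx =>
    mul_nonneg (hf_pos x hx).le <| hF x ▸ setIntegral_nonneg measurableSet_Ioi fun τ hτ =>
      (one_div_pos.2 (hf_pos τ (lt_trans hx hτ))).le
  have hG_atBot := tendsto_atBot_of_tendsto_deriv_neg hG_deriv (hq.sub_const 1) (by linarith)
  obtain ⟨x, hx_neg, hx_pos⟩ :=
    ((hG_atBot.eventually_lt_atBot 0).and (eventually_gt_atTop 0)).exists
  linarith [hG_nonneg x hx_pos]

/-- If f is C¹ on (0,∞), continuous on [0,∞), positive and nondecreasing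
(f' ≥ 0) on (0,∞), with F(u) = ∫_u^∞ dτ/f(τ) finite for u > 0, and the limit
q = lim_{ξ→∞} f'(ξ)F(ξ) exists, then q ≥ 1. -/
theorem statement0 (f f' : ℝ → ℝ) (q : ℝ)
    (hf_cont : ContinuousOn f (Set.Ici 0))
    (hf_diff : ∀ x > 0, HasDerivAt f (f' x) x)
    (hf'_cont : ContinuousOn f' (Set.Ioi 0))
    (hf_pos : ∀ x > 0, 0 < f x)
    (hf'_nonneg : ∀ x > 0, 0 ≤ f' x)
    (F : ℝ → ℝ) (hF : ∀ u, F u = ∫ τ in Set.Ioi u, 1 / f τ)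
    (hF_fin : ∀ u > 0, IntegrableOn (fun τ => 1 / f τ) (Set.Ioi u))
    (hq : Tendsto (fun ξ => f' ξ * F ξ) atTop (nhds q)) :
    1 ≤ q :=
  statement0_general f f' q hf_diff hf_pos F hF hF_fin hq
end

section
/- Let f ∈ S_q with q ∈ [1,∞). Then for every ε > 0 there exists δ_ε > 0 such that for all A ∈ (0, δ_ε) and all ρ ∈ (0,1): ρ^{-(q-ε)} f(F⁻¹(A)) ≤ f(F⁻¹(Aρ)) ≤ ρ^{-(q+ε)} f(F⁻¹(A)). -/
open MeasureTheory Filter Set Real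

/-- for f ∈ S_q, for every ε > 0 there exists δ_ε > 0 such that
ρ^{-(q-ε)} f(F⁻¹(A)) ≤ f(F⁻¹(Aρ)) ≤ ρ^{-(q+ε)} f(F⁻¹(A)) for A ∈ (0,δ_ε), ρ ∈ (0,1). -/
theorem statement2 (f f' : ℝ → ℝ) (q : ℝ) (hq1 : 1 ≤ q)
    (hf_cont : ContinuousOn f (Set.Ici 0))
    (hf_diff : ∀ x > 0, HasDerivAt f (f' x) x)
    (hf'_cont : ContinuousOn f' (Set.Ioi 0))
    (hf_pos : ∀ x > 0, 0 < f x)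
    (hf'_nonneg : ∀ x > 0, 0 ≤ f' x)
    (F : ℝ → ℝ) (hF : ∀ u, F u = ∫ τ in Set.Ioi u, 1 / f τ)
    (hF_fin : ∀ u > 0, IntegrableOn (fun τ => 1 / f τ) (Set.Ioi u))
    (hq : Tendsto (fun ξ => f' ξ * F ξ) atTop (nhds q))
    (Finv : ℝ → ℝ)
    (hFinv_left : ∀ u > 0, Finv (F u) = u)
    (hFinv_right : ∀ ξ > 0, 0 < Finv ξ ∧ F (Finv ξ) = ξ) :
    ∀ ε > 0, ∃ δ > 0, ∀ A ∈ Set.Ioo 0 δ, ∀ ρ ∈ Set.Ioo (0:ℝ) 1,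
      ρ ^ (-(q - ε)) * f (Finv A) ≤ f (Finv (A * ρ)) ∧
      f (Finv (A * ρ)) ≤ ρ ^ (-(q + ε)) * f (Finv A) := by
  -- continuity of f on (0,∞)
  have hf_ca : ∀ x > 0, ContinuousAt f x := fun x hx => (hf_diff x hx).continuousAt
  have hinv_ca : ∀ x ∈ Set.Ioi (0:ℝ), ContinuousAt (fun τ => 1 / f τ) x := fun x hx =>
    continuousAt_const.div (hf_ca x hx) (ne_of_gt (hf_pos x hx))
  -- splitting of F
  have hsplit : ∀ a b : ℝ, 0 < a → a ≤ b →
      F a = (∫ τ in Set.Ioc a b, 1 / f τ) + F b := by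
    intro a b ha hab
    have hb : 0 < b := lt_of_lt_of_le ha hab
    rw [hF a, hF b]
    have hu : Set.Ioc a b ∪ Set.Ioi b = Set.Ioi a := Set.Ioc_union_Ioi_eq_Ioi hab
    have hd : Disjoint (Set.Ioc a b) (Set.Ioi b) := by
      rw [Set.disjoint_left]
      intro x hx hx'
      exact absurd hx.2 (not_le.2 hx')
    rw [← hu, setIntegral_union hd measurableSet_Ioi
      ((hF_fin a ha).mono_set Set.Ioc_subset_Ioi_self) (hF_fin b hb)]
  -- F positive
  have hFpos : ∀ u > 0, 0 < F u := by
    intro u hu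
    rw [hF u]
    rw [setIntegral_pos_iff_support_of_nonneg_ae
      ((ae_restrict_iff' measurableSet_Ioi).2 (ae_of_all _ fun τ hτ =>
        one_div_nonneg.2 (hf_pos τ (hu.trans hτ)).le)) (hF_fin u hu)]
    have hsub : Set.Ioi u ⊆ Function.support (fun τ => 1 / f τ) ∩ Set.Ioi u := by
      intro τ hτ
      refine ⟨?_, hτ⟩
      simp only [Function.mem_support]
      exact one_div_ne_zero (ne_of_gt (hf_pos τ (hu.trans hτ)))
    calc (0:ENNReal) < volume (Set.Ioi u) := by simp [Real.volume_Ioi]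
      _ ≤ volume (Function.support (fun τ => 1 / f τ) ∩ Set.Ioi u) := measure_mono hsub
  -- F antitone
  have hFanti : ∀ a b : ℝ, 0 < a → a ≤ b → F b ≤ F a := by
    intro a b ha hab
    rw [hsplit a b ha hab]
    have : 0 ≤ ∫ τ in Set.Ioc a b, 1 / f τ :=
      setIntegral_nonneg measurableSet_Ioc fun τ hτ =>
        one_div_nonneg.2 (hf_pos τ (ha.trans hτ.1)).le
    linarith
  -- F has derivative -(1/f u) at u > 0
  have hFderiv : ∀ u : ℝ, 0 < u → HasDerivAt F (-(1 / f u)) u := by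
    intro u hu
    have ha : (0:ℝ) < u / 2 := by linarith
    have hau : u / 2 ≤ u := by linarith
    have hii : IntervalIntegrable (fun τ => 1 / f τ) volume (u / 2) u :=
      (intervalIntegrable_iff_integrableOn_Ioc_of_le hau).2
        ((hF_fin _ ha).mono_set Set.Ioc_subset_Ioi_self)
    have hmeas : StronglyMeasurableAtFilter (fun τ => 1 / f τ) (nhds u) volume :=
      ContinuousAt.stronglyMeasurableAtFilter isOpen_Ioi hinv_ca u hu
    have hg : HasDerivAt (fun x => F (u / 2) - ∫ t in (u/2)..x, 1 / f t) (-(1 / f u)) u := by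
      have := (hasDerivAt_const u (F (u / 2))).sub
        (intervalIntegral.integral_hasDerivAt_right hii hmeas (hinv_ca u hu))
      simp only [one_div, zero_sub] at this ⊢; exact this
    refine hg.congr_of_eventuallyEq ?_
    filter_upwards [isOpen_Ioi.mem_nhds (show u ∈ Set.Ioi (u/2) by
      simp only [Set.mem_Ioi]; linarith)] with x hx
    have hx' : u / 2 < x := hx
    rw [intervalIntegral.integral_of_le hx'.le]
    have := hsplit (u / 2) x ha hx'.le
    rw [this]; ring
  -- Finv goes to infinity
  have hFinv_big : ∀ M : ℝ, 0 < M → ∀ A : ℝ, 0 < A → A < F M → M < Finv A := by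
    intro M hM A hA hAF
    by_contra h
    push_neg at h
    have h1 := (hFinv_right A hA).1
    have h2 := (hFinv_right A hA).2
    have := hFanti (Finv A) M h1 h
    rw [h2] at this
    linarith
  -- main argument
  intro ε hε
  obtain ⟨N, hN⟩ := Metric.tendsto_atTop.1 hq ε hε
  set M : ℝ := max N 1 with hM_def
  have hM0 : (0:ℝ) < M := lt_of_lt_of_le one_pos (le_max_right N 1)
  have hMbound : ∀ ξ : ℝ, M ≤ ξ → q - ε < f' ξ * F ξ ∧ f' ξ * F ξ < q + ε := by
    intro ξ hξ
    have := hN ξ (le_trans (le_max_left N 1) hξ)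
    rw [Real.dist_eq, abs_lt] at this
    constructor <;> linarith [this.1, this.2]
  refine ⟨F M, hFpos M hM0, ?_⟩
  intro A hA ρ hρ
  have hA0 : 0 < A := hA.1
  have hAρ0 : 0 < A * ρ := mul_pos hA0 hρ.1
  have hAρA : A * ρ < A := by nlinarith [hρ.2, hA0]
  set ξ₁ := Finv A with hξ₁_def
  set ξ₂ := Finv (A * ρ) with hξ₂_def
  have hξ₁M : M < ξ₁ := hFinv_big M hM0 A hA0 hA.2
  have hξ₂M : M < ξ₂ := hFinv_big M hM0 (A * ρ) hAρ0 (lt_trans hAρA hA.2)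
  have hξ₁0 : 0 < ξ₁ := lt_trans hM0 hξ₁M
  have hξ₂0 : 0 < ξ₂ := lt_trans hM0 hξ₂M
  have hFξ₁ : F ξ₁ = A := (hFinv_right A hA0).2
  have hFξ₂ : F ξ₂ = A * ρ := (hFinv_right (A * ρ) hAρ0).2
  have hξ₁₂ : ξ₁ ≤ ξ₂ := by
    by_contra h
    push_neg at h
    have := hFanti ξ₂ ξ₁ hξ₂0 h.le
    rw [hFξ₁, hFξ₂] at this
    linarith
  -- derivative of the auxiliary functions
  have haux : ∀ c : ℝ, ∀ ξ : ℝ, 0 < ξ →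
      HasDerivAt (fun x => Real.log (f x) + c * Real.log (F x))
        (f' ξ / f ξ + c * (-(1 / f ξ) / F ξ)) ξ := by
    intro c ξ hξ
    exact ((hf_diff ξ hξ).log (ne_of_gt (hf_pos ξ hξ))).add
      (((hFderiv ξ hξ).log (ne_of_gt (hFpos ξ hξ))).const_mul c)
  have hderiv_eq : ∀ c : ℝ, ∀ ξ : ℝ, 0 < ξ →
      f' ξ / f ξ + c * (-(1 / f ξ) / F ξ) = (f' ξ * F ξ - c) / (f ξ * F ξ) := by
    intro c ξ hξ
    have h1 := ne_of_gt (hf_pos ξ hξ)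
    have h2 := ne_of_gt (hFpos ξ hξ)
    field_simp
    ring
  -- lower bound via monotone function
  have hGmono : MonotoneOn (fun x => Real.log (f x) + (q - ε) * Real.log (F x)) (Set.Ici M) := by
    apply monotoneOn_of_hasDerivWithinAt_nonneg (convex_Ici M)
      (f' := fun ξ => f' ξ / f ξ + (q - ε) * (-(1 / f ξ) / F ξ))
    · intro ξ hξ
      exact (haux (q - ε) ξ (lt_of_lt_of_le hM0 hξ)).continuousAt.continuousWithinAt
    · intro ξ hξ
      rw [interior_Ici] at hξ
      exact (haux (q - ε) ξ (lt_trans hM0 hξ)).hasDerivWithinAt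
    · intro ξ hξ
      rw [interior_Ici] at hξ
      have hξ0 : 0 < ξ := lt_trans hM0 hξ
      rw [hderiv_eq (q - ε) ξ hξ0]
      exact div_nonneg (by linarith [(hMbound ξ hξ.le).1])
        (mul_nonneg (hf_pos ξ hξ0).le (hFpos ξ hξ0).le)
  have hHanti : AntitoneOn (fun x => Real.log (f x) + (q + ε) * Real.log (F x)) (Set.Ici M) := by
    apply antitoneOn_of_hasDerivWithinAt_nonpos (convex_Ici M)
      (f' := fun ξ => f' ξ / f ξ + (q + ε) * (-(1 / f ξ) / F ξ))
    · intro ξ hξ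
      exact (haux (q + ε) ξ (lt_of_lt_of_le hM0 hξ)).continuousAt.continuousWithinAt
    · intro ξ hξ
      rw [interior_Ici] at hξ
      exact (haux (q + ε) ξ (lt_trans hM0 hξ)).hasDerivWithinAt
    · intro ξ hξ
      rw [interior_Ici] at hξ
      have hξ0 : 0 < ξ := lt_trans hM0 hξ
      rw [hderiv_eq (q + ε) ξ hξ0]
      apply div_nonpos_of_nonpos_of_nonneg (by linarith [(hMbound ξ hξ.le).2])
        (mul_nonneg (hf_pos ξ hξ0).le (hFpos ξ hξ0).le)
  have hG := hGmono (Set.mem_Ici.2 hξ₁M.le) (Set.mem_Ici.2 hξ₂M.le) hξ₁₂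
  have hH := hHanti (Set.mem_Ici.2 hξ₁M.le) (Set.mem_Ici.2 hξ₂M.le) hξ₁₂
  simp only [hFξ₁, hFξ₂] at hG hH
  have hlogAρ : Real.log (A * ρ) = Real.log A + Real.log ρ :=
    Real.log_mul (ne_of_gt hA0) (ne_of_gt hρ.1)
  rw [hlogAρ] at hG hH
  have hf₁ : 0 < f ξ₁ := hf_pos ξ₁ hξ₁0
  have hf₂ : 0 < f ξ₂ := hf_pos ξ₂ hξ₂0
  constructor
  · -- lower bound
    have hpow : (0:ℝ) < ρ ^ (-(q - ε)) := Real.rpow_pos_of_pos hρ.1 _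
    rw [← Real.log_le_log_iff (mul_pos hpow hf₁) hf₂,
      Real.log_mul (ne_of_gt hpow) (ne_of_gt hf₁), Real.log_rpow hρ.1]
    linarith
  · have hpow : (0:ℝ) < ρ ^ (-(q + ε)) := Real.rpow_pos_of_pos hρ.1 _
    rw [← Real.log_le_log_iff hf₂ (mul_pos hpow hf₁),
      Real.log_mul (ne_of_gt hpow) (ne_of_gt hf₁), Real.log_rpow hρ.1]
    linarith
end

section
/- Let N ≥ 1, 0 < γ < min{2, N}, f ∈ S_q with q ∈ [1,∞), and θ > (2−γ)(q−1)/N. Then limsup_{η→∞} (1/f(η)) ∫₀¹ σ^{(N/2)(θ + (2−γ)/N) − 1} (1−σ)^{−γ/2} f(F⁻¹(F(η) σ^{(2−γ)/2})) dσ < ∞. -/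
open MeasureTheory Filter Set Real

lemma aux_beta {p e : ℝ} (hp : -1 < p) (he : -1 < e) (he0 : e ≤ 0) :
    IntegrableOn (fun x : ℝ => x ^ p * (1 - x) ^ e) (Set.Ioo (0:ℝ) 1) := by
  have hmeas : Measurable fun x : ℝ => x ^ p * (1 - x) ^ e := by fun_prop
  have h1 : IntegrableOn (fun x : ℝ => x ^ p * (1 - x) ^ e) (Set.Ioc (0:ℝ) (1/2)) := by
    have hint : IntegrableOn (fun x : ℝ => (2:ℝ) ^ (-e) * x ^ p) (Set.Ioc (0:ℝ) (1/2)) := by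
      have h := intervalIntegral.intervalIntegrable_rpow' (a := (0:ℝ)) (b := 1/2) hp
      rw [intervalIntegrable_iff_integrableOn_Ioc_of_le (by norm_num)] at h
      exact h.const_mul _
    refine hint.mono' hmeas.aestronglyMeasurable ?_
    refine (ae_restrict_iff' measurableSet_Ioc).2 (Filter.Eventually.of_forall fun x hx => ?_)
    have hx0 : 0 < x := hx.1
    have hx2 : x ≤ 1/2 := hx.2
    have h1x : (0:ℝ) < 1 - x := by linarith
    have hnn : 0 ≤ x ^ p * (1 - x) ^ e :=
      mul_nonneg (rpow_nonneg hx0.le _) (rpow_nonneg h1x.le _)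
    rw [Real.norm_eq_abs, abs_of_nonneg hnn]
    have hb : (1 - x) ^ e ≤ (1/2 : ℝ) ^ e :=
      Real.rpow_le_rpow_of_nonpos (by norm_num) (by linarith) he0
    have h2e : ((1:ℝ)/2) ^ e = (2:ℝ) ^ (-e) := by
      rw [Real.rpow_neg (by norm_num), ← Real.inv_rpow (by norm_num)]
      norm_num
    calc x ^ p * (1 - x) ^ e ≤ x ^ p * ((1/2:ℝ) ^ e) :=
          mul_le_mul_of_nonneg_left hb (rpow_nonneg hx0.le _)
      _ = (2:ℝ) ^ (-e) * x ^ p := by rw [h2e]; ring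
  have h2 : IntegrableOn (fun x : ℝ => x ^ p * (1 - x) ^ e) (Set.Ioo (1/2:ℝ) 1) := by
    have hint : IntegrableOn (fun x : ℝ => ((1/2:ℝ) ^ p + 1) * (1 - x) ^ e)
        (Set.Ioo (1/2:ℝ) 1) := by
      have h := intervalIntegral.intervalIntegrable_rpow' (a := (0:ℝ)) (b := 1/2) he
      have h' := (h.comp_sub_left 1).symm
      norm_num at h'
      rw [intervalIntegrable_iff_integrableOn_Ioc_of_le (by norm_num)] at h'
      exact (h'.mono_set Set.Ioo_subset_Ioc_self).const_mul _
    refine hint.mono' hmeas.aestronglyMeasurable ?_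
    refine (ae_restrict_iff' measurableSet_Ioo).2 (Filter.Eventually.of_forall fun x hx => ?_)
    have hx0 : (0:ℝ) < x := by linarith [hx.1]
    have h1x : (0:ℝ) < 1 - x := by linarith [hx.2]
    have hnn : 0 ≤ x ^ p * (1 - x) ^ e :=
      mul_nonneg (rpow_nonneg hx0.le _) (rpow_nonneg h1x.le _)
    rw [Real.norm_eq_abs, abs_of_nonneg hnn]
    have hb : x ^ p ≤ (1/2:ℝ) ^ p + 1 := by
      rcases le_or_gt p 0 with hp0 | hp0
      · have := Real.rpow_le_rpow_of_nonpos (by norm_num : (0:ℝ) < 1/2) hx.1.le hp0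
        linarith
      · have h1 : x ^ p ≤ (1:ℝ) := Real.rpow_le_one hx0.le (by linarith [hx.2]) hp0.le
        have h2 : (0:ℝ) ≤ (1/2:ℝ) ^ p := rpow_nonneg (by norm_num) _
        linarith
    calc x ^ p * (1 - x) ^ e ≤ ((1/2:ℝ) ^ p + 1) * (1 - x) ^ e :=
          mul_le_mul_of_nonneg_right hb (rpow_nonneg h1x.le _)
      _ = _ := rfl
  refine (h1.union h2).mono_set fun x hx => ?_
  rcases le_or_gt x (1/2) with h | h
  · exact Or.inl ⟨hx.1, h⟩
  · exact Or.inr ⟨h, hx.2⟩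

set_option maxHeartbeats 1000000 in
/-- for N ≥ 1, 0 < γ < min{2,N}, f ∈ S_q, θ > (2-γ)(q-1)/N, the quantity
(1/f(η)) ∫₀¹ σ^{(N/2)(θ+(2-γ)/N)-1} (1-σ)^{-γ/2} f(F⁻¹(F(η)σ^{(2-γ)/2}))dσ
has finite limsup as η → ∞. -/
theorem statement3 (N : ℕ) (hN : 1 ≤ N) (γ : ℝ) (hγ : 0 < γ ∧ γ < min 2 (N : ℝ))
    (f f' : ℝ → ℝ) (q : ℝ) (hq1 : 1 ≤ q)
    (θ : ℝ) (hθ : θ > (2 - γ) * (q - 1) / N)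
    (hf_cont : ContinuousOn f (Set.Ici 0))
    (hf_diff : ∀ x > 0, HasDerivAt f (f' x) x)
    (hf'_cont : ContinuousOn f' (Set.Ioi 0))
    (hf_pos : ∀ x > 0, 0 < f x)
    (hf'_nonneg : ∀ x > 0, 0 ≤ f' x)
    (F : ℝ → ℝ) (hF : ∀ u, F u = ∫ τ in Set.Ioi u, 1 / f τ)
    (hF_fin : ∀ u > 0, IntegrableOn (fun τ => 1 / f τ) (Set.Ioi u))
    (hq : Tendsto (fun ξ => f' ξ * F ξ) atTop (nhds q))
    (Finv : ℝ → ℝ)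
    (hFinv_left : ∀ u > 0, Finv (F u) = u)
    (hFinv_right : ∀ ξ > 0, 0 < Finv ξ ∧ F (Finv ξ) = ξ) :
    ∃ C : ℝ, ∀ᶠ η in atTop,
      (1 / f η) * ∫ σ in Set.Ioo (0:ℝ) 1,
        σ ^ ((N / 2 : ℝ) * (θ + (2 - γ) / N) - 1) * (1 - σ) ^ (-(γ / 2)) *
          f (Finv (F η * σ ^ ((2 - γ) / 2))) ≤ C := by
  obtain ⟨hγ0, hγm⟩ := hγ
  have hγ2 : γ < 2 := lt_of_lt_of_le hγm (min_le_left _ _)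
  have h2γ : (0:ℝ) < 2 - γ := by linarith
  have hNpos : (0:ℝ) < N := by exact_mod_cast Nat.lt_of_lt_of_le Nat.zero_lt_one hN
  -- basic continuity facts
  have hfc : ∀ x > 0, ContinuousAt f x := fun x hx =>
    hf_cont.continuousAt (Filter.mem_of_superset (Ioi_mem_nhds hx) Ioi_subset_Ici_self)
  have hinvc : ∀ x ∈ Set.Ioi (0:ℝ), ContinuousAt (fun τ => 1 / f τ) x := fun x hx =>
    continuousAt_const.div (hfc x hx) (hf_pos x hx).ne'
  -- decomposition of F
  have hdec : ∀ v u : ℝ, 0 < v → v ≤ u →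
      F v = (∫ τ in Set.Ioc v u, 1 / f τ) + F u := by
    intro v u hv hvu
    have hdisj : Disjoint (Set.Ioc v u) (Set.Ioi u) := Set.Ioc_disjoint_Ioi le_rfl
    have hun : Set.Ioc v u ∪ Set.Ioi u = Set.Ioi v := Set.Ioc_union_Ioi_eq_Ioi hvu
    have hi1 : IntegrableOn (fun τ => 1 / f τ) (Set.Ioc v u) :=
      (hF_fin v hv).mono_set Set.Ioc_subset_Ioi_self
    have hi2 : IntegrableOn (fun τ => 1 / f τ) (Set.Ioi u) :=
      (hF_fin v hv).mono_set (Set.Ioi_subset_Ioi hvu)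
    rw [hF v, hF u, ← hun, setIntegral_union hdisj measurableSet_Ioi hi1 hi2]
  -- nonnegativity / positivity of F
  have hFnonneg : ∀ u > 0, 0 ≤ F u := by
    intro u hu
    rw [hF u]
    refine setIntegral_nonneg measurableSet_Ioi fun τ hτ => ?_
    exact le_of_lt (div_pos one_pos (hf_pos τ (lt_trans hu hτ)))
  have hFpos : ∀ u > 0, 0 < F u := by
    intro u hu
    have hIoc : (0:ℝ) < ∫ τ in Set.Ioc u (u+1), 1 / f τ := by
      have hii : IntervalIntegrable (fun τ => 1 / f τ) volume u (u+1) := by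
        rw [intervalIntegrable_iff_integrableOn_Ioc_of_le (by linarith)]
        exact (hF_fin u hu).mono_set Set.Ioc_subset_Ioi_self
      have := intervalIntegral.intervalIntegral_pos_of_pos_on hii
        (fun x hx => div_pos one_pos (hf_pos x (lt_trans hu hx.1))) (by linarith)
      rwa [intervalIntegral.integral_of_le (by linarith)] at this
    have := hdec u (u+1) hu (by linarith)
    have := hFnonneg (u+1) (by linarith)
    linarith
  have hFanti : ∀ v u : ℝ, 0 < v → v ≤ u → F u ≤ F v := by
    intro v u hv hvu
    have h := hdec v u hv hvu
    have : (0:ℝ) ≤ ∫ τ in Set.Ioc v u, 1 / f τ :=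
      setIntegral_nonneg measurableSet_Ioc fun τ hτ =>
        le_of_lt (div_pos one_pos (hf_pos τ (lt_trans hv hτ.1)))
    linarith
  -- derivative of F
  have hFd : ∀ x > 0, HasDerivAt F (-(1 / f x)) x := by
    intro x hx
    set a := x / 2 with ha
    have hax : a < x := by simp only [ha]; linarith
    have ha0 : 0 < a := by simp only [ha]; linarith
    have key : ∀ u ∈ Set.Ioi (0:ℝ), F u = F a - ∫ t in a..u, 1 / f t := by
      intro u hu
      rcases le_total a u with h | h
      · rw [intervalIntegral.integral_of_le h]
        have := hdec a u ha0 h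
        have : (∫ t in Set.Ioc a u, 1 / f t) = F a - F u := by linarith
        rw [this]; ring
      · rw [intervalIntegral.integral_symm, intervalIntegral.integral_of_le h]
        have := hdec u a hu h
        linarith
    have hii : IntervalIntegrable (fun τ => 1 / f τ) volume a x := by
      rw [intervalIntegrable_iff_integrableOn_Ioc_of_le hax.le]
      exact (hF_fin (a/2) (by linarith)).mono_set
        (Set.Ioc_subset_Ioi_self.trans (Set.Ioi_subset_Ioi (by linarith)))
    have hmeas := ContinuousAt.stronglyMeasurableAtFilter (μ := volume) isOpen_Ioi hinvc x hx
    have h1 : HasDerivAt (fun u => ∫ t in a..u, 1 / f t) (1 / f x) x :=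
      intervalIntegral.integral_hasDerivAt_right hii hmeas (hinvc x hx)
    have h2 : HasDerivAt (fun u => F a - ∫ t in a..u, 1 / f t) (-(1 / f x)) x :=
      h1.const_sub (F a)
    exact h2.congr_of_eventuallyEq
      (Filter.eventuallyEq_of_mem (Ioi_mem_nhds hx) fun u hu => key u hu)
  -- choice of ε and ξ₀
  have hB : q - 1 < N * θ / (2 - γ) := by
    rw [gt_iff_lt, div_lt_iff₀ hNpos] at hθ
    rw [lt_div_iff₀ h2γ]; nlinarith
  set ε := (N * θ / (2 - γ) + 1 - q) / 2 with hε_def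
  have hε : 0 < ε := by simp only [hε_def]; linarith
  have hqε : q + ε < N * θ / (2 - γ) + 1 := by simp only [hε_def]; linarith
  obtain ⟨ξ₁, hξ₁⟩ := eventually_atTop.1 (hq.eventually_le_const (by linarith : q < q + ε))
  set ξ₀ := max ξ₁ 1 with hξ₀_def
  have hξ₀1 : (1:ℝ) ≤ ξ₀ := le_max_right _ _
  have hξ₀le : ∀ ξ ≥ ξ₀, f' ξ * F ξ ≤ q + ε := fun ξ hξ =>
    hξ₁ ξ (le_trans (le_max_left _ _) hξ)
  -- exponent p
  set c := (2 - γ) / 2 with hc_def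
  have hc : 0 < c := by simp only [hc_def]; linarith
  set A := (N / 2 : ℝ) * (θ + (2 - γ) / N) with hA_def
  have hA : A = N * θ / 2 + c := by
    simp only [hA_def, hc_def]; field_simp
  set p := A - 1 - (q + ε) * c with hp_def
  have hp : -1 < p := by
    have h2 : (0:ℝ) < (N * θ / (2 - γ) + 1 - (q + ε)) * c :=
      mul_pos (by linarith) hc
    have h3 : p = (N * θ / (2 - γ) + 1 - (q + ε)) * c - 1 := by
      simp only [hp_def, hA, hc_def]
      field_simp
      ring
    rw [h3]; linarith
  -- the key comparison
  have hcomp : ∀ η, ξ₀ ≤ η → ∀ σ ∈ Set.Ioo (0:ℝ) 1,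
      f (Finv (F η * σ ^ c)) ≤ f η * σ ^ (-((q + ε) * c)) := by
    intro η hη σ hσ
    have hη0 : 0 < η := lt_of_lt_of_le one_pos (le_trans hξ₀1 hη)
    have hσ0 : 0 < σ := hσ.1
    have hσ1 : σ < 1 := hσ.2
    have hFη : 0 < F η := hFpos η hη0
    have hsc : 0 < σ ^ c := rpow_pos_of_pos hσ0 _
    have hsc1 : σ ^ c < 1 := Real.rpow_lt_one hσ0.le hσ1 hc
    set s := F η * σ ^ c with hs_def
    have hs0 : 0 < s := mul_pos hFη hsc
    have hsF : s < F η := by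
      calc s = F η * σ ^ c := rfl
        _ < F η * 1 := by exact mul_lt_mul_of_pos_left hsc1 hFη
        _ = F η := mul_one _
    obtain ⟨hu0, hFu⟩ := hFinv_right s hs0
    set u := Finv s with hu_def
    have huη : η ≤ u := by
      by_contra h
      push_neg at h
      have := hFanti u η hu0 h.le
      rw [hFu] at this
      linarith
    -- H is antitone on [η, u]
    set H := fun ξ => Real.log (f ξ) + (q + ε) * Real.log (F ξ) with hH_def
    have hHd : ∀ x, η ≤ x → HasDerivAt H
        (f' x / f x + (q + ε) * (-(1 / f x) / F x)) x := by
      intro x hx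
      have hx0 : 0 < x := lt_of_lt_of_le hη0 hx
      exact ((hf_diff x hx0).log (hf_pos x hx0).ne').add
        (((hFd x hx0).log (hFpos x hx0).ne').const_mul (q + ε))
    have hHanti : AntitoneOn H (Set.Icc η u) := by
      apply antitoneOn_of_deriv_nonpos (convex_Icc η u)
      · intro x hx
        exact (hHd x hx.1).continuousAt.continuousWithinAt
      · intro x hx
        rw [interior_Icc] at hx
        exact (hHd x hx.1.le).differentiableAt.differentiableWithinAt
      · intro x hx
        rw [interior_Icc] at hx
        have hx0 : 0 < x := lt_of_lt_of_le hη0 hx.1.le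
        rw [(hHd x hx.1.le).deriv]
        have hfx := hf_pos x hx0
        have hFx := hFpos x hx0
        have hle := hξ₀le x (le_trans hη hx.1.le)
        have heq : f' x / f x + (q + ε) * (-(1 / f x) / F x)
            = (f' x * F x - (q + ε)) / (f x * F x) := by
          field_simp; ring
        rw [heq]
        exact div_nonpos_of_nonpos_of_nonneg (by linarith) (mul_pos hfx hFx).le
    have hHle : H u ≤ H η := hHanti ⟨le_refl η, huη⟩ ⟨huη, le_refl u⟩ huη
    have hlogs : Real.log s = Real.log (F η) + c * Real.log σ := by
      rw [hs_def, Real.log_mul hFη.ne' hsc.ne', Real.log_rpow hσ0]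
    have hfu : 0 < f u := hf_pos u hu0
    have hfη : 0 < f η := hf_pos η hη0
    have hlog : Real.log (f u) ≤ Real.log (f η) + (-((q + ε) * c)) * Real.log σ := by
      have := hHle
      simp only [hH_def] at this
      rw [hFu] at this
      rw [hlogs] at this
      nlinarith
    calc f u = Real.exp (Real.log (f u)) := (Real.exp_log hfu).symm
      _ ≤ Real.exp (Real.log (f η) + (-((q + ε) * c)) * Real.log σ) := Real.exp_le_exp.2 hlog
      _ = f η * σ ^ (-((q + ε) * c)) := by
          rw [Real.exp_add, Real.exp_log hfη, Real.rpow_def_of_pos hσ0]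
          ring_nf
  -- conclusion
  have hbeta : IntegrableOn (fun x : ℝ => x ^ p * (1 - x) ^ (-(γ/2))) (Set.Ioo (0:ℝ) 1) :=
    aux_beta hp (by linarith) (by linarith)
  refine ⟨∫ x in Set.Ioo (0:ℝ) 1, x ^ p * (1 - x) ^ (-(γ/2)), eventually_atTop.2 ⟨ξ₀, ?_⟩⟩
  intro η hη
  have hη0 : 0 < η := lt_of_lt_of_le one_pos (le_trans hξ₀1 hη)
  have hfη : 0 < f η := hf_pos η hη0
  have hFη : 0 < F η := hFpos η hη0
  have hintmono : (∫ σ in Set.Ioo (0:ℝ) 1,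
      σ ^ (A - 1) * (1 - σ) ^ (-(γ / 2)) * f (Finv (F η * σ ^ c)))
      ≤ ∫ σ in Set.Ioo (0:ℝ) 1, f η * (σ ^ p * (1 - σ) ^ (-(γ/2))) := by
    refine integral_mono_of_nonneg ?_ (hbeta.const_mul _) ?_
    · refine (ae_restrict_iff' measurableSet_Ioo).2 (Filter.Eventually.of_forall fun σ hσ => ?_)
      have hσ0 : 0 < σ := hσ.1
      have hs0 : 0 < F η * σ ^ c := mul_pos hFη (rpow_pos_of_pos hσ0 _)
      have := hf_pos _ (hFinv_right _ hs0).1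
      exact mul_nonneg (mul_nonneg (rpow_nonneg hσ0.le _)
        (rpow_nonneg (by linarith [hσ.2] : (0:ℝ) ≤ 1 - σ) _)) this.le
    · refine (ae_restrict_iff' measurableSet_Ioo).2 (Filter.Eventually.of_forall fun σ hσ => ?_)
      have hσ0 : 0 < σ := hσ.1
      have h1σ : (0:ℝ) ≤ 1 - σ := by linarith [hσ.2]
      have hfac : 0 ≤ σ ^ (A - 1) * (1 - σ) ^ (-(γ / 2)) :=
        mul_nonneg (rpow_nonneg hσ0.le _) (rpow_nonneg h1σ _)
      calc σ ^ (A - 1) * (1 - σ) ^ (-(γ / 2)) * f (Finv (F η * σ ^ c))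
          ≤ σ ^ (A - 1) * (1 - σ) ^ (-(γ / 2)) * (f η * σ ^ (-((q + ε) * c))) :=
            mul_le_mul_of_nonneg_left (hcomp η hη σ hσ) hfac
        _ = f η * (σ ^ p * (1 - σ) ^ (-(γ/2))) := by
            rw [hp_def, show A - 1 - (q + ε) * c = (A - 1) + (-((q + ε) * c)) by ring,
              Real.rpow_add hσ0]
            ring
  rw [integral_const_mul] at hintmono
  have hgoal : (1 / f η) * ∫ σ in Set.Ioo (0:ℝ) 1,
        σ ^ (A - 1) * (1 - σ) ^ (-(γ / 2)) * f (Finv (F η * σ ^ c))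
      ≤ (1 / f η) * (f η * ∫ x in Set.Ioo (0:ℝ) 1, x ^ p * (1 - x) ^ (-(γ/2))) :=
    mul_le_mul_of_nonneg_left hintmono (by positivity)
  calc (1 / f η) * ∫ σ in Set.Ioo (0:ℝ) 1,
        σ ^ ((N / 2 : ℝ) * (θ + (2 - γ) / N) - 1) * (1 - σ) ^ (-(γ / 2)) *
          f (Finv (F η * σ ^ ((2 - γ) / 2)))
      = (1 / f η) * ∫ σ in Set.Ioo (0:ℝ) 1,
        σ ^ (A - 1) * (1 - σ) ^ (-(γ / 2)) * f (Finv (F η * σ ^ c)) := by rw [hA_def, hc_def]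
    _ ≤ (1 / f η) * (f η * ∫ x in Set.Ioo (0:ℝ) 1, x ^ p * (1 - x) ^ (-(γ/2))) := hgoal
    _ = ∫ x in Set.Ioo (0:ℝ) 1, x ^ p * (1 - x) ^ (-(γ/2)) := by
        field_simp
end

section
/- Let f ∈ S_q with q ∈ [1,∞). Then for every ε > 0 there exist ζ_ε > 0 and C > 0 such that F(ξ) ≤ C ξ^{−1/(q−1+ε)} for all ξ ≥ ζ_ε. -/
open MeasureTheory Filter Set Real

/-- for f ∈ S_q, for every ε > 0 there exist ζ_ε > 0 and C > 0 such that
F(ξ) ≤ C ξ^{-1/(q-1+ε)} for all ξ ≥ ζ_ε. -/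
theorem statement4 (f f' : ℝ → ℝ) (q : ℝ) (hq1 : 1 ≤ q)
    (hf_cont : ContinuousOn f (Set.Ici 0))
    (hf_diff : ∀ x > 0, HasDerivAt f (f' x) x)
    (hf'_cont : ContinuousOn f' (Set.Ioi 0))
    (hf_pos : ∀ x > 0, 0 < f x)
    (hf'_nonneg : ∀ x > 0, 0 ≤ f' x)
    (F : ℝ → ℝ) (hF : ∀ u, F u = ∫ τ in Set.Ioi u, 1 / f τ)
    (hF_fin : ∀ u > 0, IntegrableOn (fun τ => 1 / f τ) (Set.Ioi u))
    (hq : Tendsto (fun ξ => f' ξ * F ξ) atTop (nhds q)) :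
    ∀ ε > 0, ∃ ζ > 0, ∃ C > 0, ∀ ξ ≥ ζ,
      F ξ ≤ C * ξ ^ (-(1 / (q - 1 + ε))) := by
  -- continuity of 1/f on Ioi 0
  have hfC : ∀ x, 0 < x → ContinuousAt f x := fun x hx => (hf_diff x hx).continuousAt
  have hinvC : ContinuousOn (fun τ => 1 / f τ) (Set.Ioi 0) := by
    intro x hx
    exact (continuousAt_const.div (hfC x hx) (hf_pos x hx).ne').continuousWithinAt
  -- derivative of F
  have hF_deriv : ∀ u, 0 < u → HasDerivAt F (-(1 / f u)) u := by
    intro u hu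
    set a := u / 2 with ha
    have ha0 : 0 < a := by positivity
    have hau : a < u := by simp only [ha]; linarith
    have key : ∀ v, a < v → F v = F a - ∫ t in a..v, 1 / f t := by
      intro v hv
      have hsplit : Set.Ioc a v ∪ Set.Ioi v = Set.Ioi a := Set.Ioc_union_Ioi_eq_Ioi hv.le
      have hint : IntegrableOn (fun τ => 1 / f τ) (Set.Ioi a) := hF_fin a ha0
      have h1 : IntegrableOn (fun τ => 1 / f τ) (Set.Ioc a v) :=
        hint.mono_set (by rw [← hsplit]; exact Set.subset_union_left)
      have h2 : IntegrableOn (fun τ => 1 / f τ) (Set.Ioi v) :=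
        hint.mono_set (by rw [← hsplit]; exact Set.subset_union_right)
      have hFa : F a = (∫ t in Set.Ioc a v, 1 / f t) + F v := by
        rw [hF a, hF v, ← hsplit,
          setIntegral_union (Set.Ioc_disjoint_Ioi le_rfl) measurableSet_Ioi h1 h2]
      rw [intervalIntegral.integral_of_le hv.le]
      have : (∫ t in Set.Ioc a v, 1 / f t) = ∫ t in Set.Ioc a v, 1 / f t := rfl
      linarith [hFa]
    have hderiv_int : HasDerivAt (fun v => ∫ t in a..v, 1 / f t) (1 / f u) u := by
      apply intervalIntegral.integral_hasDerivAt_right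
      · rw [intervalIntegrable_iff_integrableOn_Ioc_of_le hau.le]
        exact (hF_fin a ha0).mono_set Set.Ioc_subset_Ioi_self
      · exact hinvC.stronglyMeasurableAtFilter isOpen_Ioi u hu
      · exact hinvC.continuousAt (isOpen_Ioi.mem_nhds hu)
    have hd : HasDerivAt (fun v => F a - ∫ t in a..v, 1 / f t) (-(1 / f u)) u := by
      exact ((hasDerivAt_const u (F a)).sub hderiv_int).congr_deriv (by simp)
    refine hd.congr_of_eventuallyEq ?_
    filter_upwards [isOpen_Ioi.mem_nhds (show u ∈ Set.Ioi a from hau)] with v hv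
    exact key v hv
  -- positivity of F
  have hF_pos : ∀ u, 0 < u → 0 < F u := by
    intro u hu
    rw [hF u]
    have hnn : 0 ≤ᵐ[volume.restrict (Set.Ioi u)] fun τ => 1 / f τ := by
      filter_upwards [ae_restrict_mem measurableSet_Ioi] with τ hτ
      exact le_of_lt (div_pos one_pos (hf_pos τ (hu.trans hτ)))
    rw [setIntegral_pos_iff_support_of_nonneg_ae hnn (hF_fin u hu)]
    have hsub : Set.Ioi u ⊆ Function.support (fun τ => 1 / f τ) ∩ Set.Ioi u := by
      intro τ hτ
      exact ⟨ne_of_gt (div_pos one_pos (hf_pos τ (hu.trans hτ))), hτ⟩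
    calc (0 : ENNReal) < volume (Set.Ioi u) := by simp [Real.volume_Ioi]
      _ ≤ volume (Function.support (fun τ => 1 / f τ) ∩ Set.Ioi u) := measure_mono hsub
  intro ε hε
  set c : ℝ := q - 1 + ε with hc
  have hc0 : 0 < c := by simp only [hc]; linarith
  -- derivative of g = f * F
  have hg_deriv : ∀ ξ, 0 < ξ → HasDerivAt (fun x => f x * F x) (f' ξ * F ξ - 1) ξ := by
    intro ξ hξ
    have := (hf_diff ξ hξ).mul (hF_deriv ξ hξ)
    have hfξ : f ξ ≠ 0 := (hf_pos ξ hξ).ne'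
    refine this.congr_deriv ?_
    rw [mul_neg, mul_one_div_cancel hfξ]
    ring
  -- eventually f' ξ * F ξ < q + ε/2
  obtain ⟨ζ0', hζ0'⟩ := (hq.eventually_lt_const (show q < q + ε / 2 by linarith)).exists_forall_of_atTop
  set ζ0 : ℝ := max ζ0' 1 with hζ0def
  have hζ0pos : (0:ℝ) < ζ0 := lt_of_lt_of_le one_pos (le_max_right _ _)
  have hζ0bd : ∀ ξ ≥ ζ0, f' ξ * F ξ < q + ε / 2 := fun ξ hξ =>
    hζ0' ξ (le_trans (le_max_left _ _) hξ)
  -- the function φ ξ = g ξ - (q - 1 + ε/2) ξ is antitone on Ici ζ0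
  have hφ_anti : AntitoneOn (fun ξ => f ξ * F ξ - (q - 1 + ε / 2) * ξ) (Set.Ici ζ0) := by
    have hD : ∀ x ∈ Set.Ici ζ0, (0:ℝ) < x := fun x hx => lt_of_lt_of_le hζ0pos hx
    have hder : ∀ x, 0 < x →
        HasDerivAt (fun ξ => f ξ * F ξ - (q - 1 + ε / 2) * ξ)
          ((f' x * F x - 1) - (q - 1 + ε / 2)) x := by
      intro x hx
      exact ((hg_deriv x hx).sub ((hasDerivAt_id x).const_mul (q - 1 + ε / 2))).congr_deriv (by simp)
    apply antitoneOn_of_deriv_nonpos (convex_Ici ζ0)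
    · intro x hx
      exact (hder x (hD x hx)).continuousAt.continuousWithinAt
    · intro x hx
      rw [interior_Ici] at hx
      exact (hder x (lt_trans hζ0pos hx)).differentiableAt.differentiableWithinAt
    · intro x hx
      rw [interior_Ici] at hx
      rw [(hder x (lt_trans hζ0pos hx)).deriv]
      have := hζ0bd x hx.le
      linarith
  -- pick ζ1
  set G0 : ℝ := f ζ0 * F ζ0 with hG0
  set ζ1 : ℝ := max ζ0 (2 * G0 / ε) with hζ1def
  have hζ1pos : 0 < ζ1 := lt_of_lt_of_le hζ0pos (le_max_left _ _)
  have hgbd : ∀ ξ ≥ ζ1, f ξ * F ξ ≤ c * ξ := by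
    intro ξ hξ
    have hξ0 : ζ0 ≤ ξ := le_trans (le_max_left _ _) hξ
    have h1 := hφ_anti (Set.self_mem_Ici) (show ξ ∈ Set.Ici ζ0 from hξ0) hξ0
    -- g ξ ≤ G0 + (q-1+ε/2) * ξ - (q-1+ε/2) * ζ0  ≤ G0 + (q-1+ε/2) ξ
    have hq2 : 0 ≤ q - 1 + ε / 2 := by linarith
    have h2 : f ξ * F ξ ≤ G0 + (q - 1 + ε / 2) * ξ := by
      have := mul_nonneg hq2 hζ0pos.le
      simp only at h1
      nlinarith
    have h3 : 2 * G0 / ε ≤ ξ := le_trans (le_max_right _ _) hξ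
    have h4 : G0 ≤ ε / 2 * ξ := by
      rw [div_le_iff₀ hε] at h3
      linarith
    calc f ξ * F ξ ≤ G0 + (q - 1 + ε / 2) * ξ := h2
      _ ≤ ε / 2 * ξ + (q - 1 + ε / 2) * ξ := by linarith
      _ = c * ξ := by ring
  -- the function h ξ = log (F ξ) + (1/c) * log ξ is antitone on Ici ζ1
  set α : ℝ := 1 / c with hα
  have hα0 : 0 < α := by positivity
  have hh_der : ∀ x, 0 < x →
      HasDerivAt (fun ξ => Real.log (F ξ) + α * Real.log ξ)
        (-(1 / f x) / F x + α * x⁻¹) x := by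
    intro x hx
    exact ((hF_deriv x hx).log (hF_pos x hx).ne').add
      ((Real.hasDerivAt_log hx.ne').const_mul α)
  have hh_anti : AntitoneOn (fun ξ => Real.log (F ξ) + α * Real.log ξ) (Set.Ici ζ1) := by
    apply antitoneOn_of_deriv_nonpos (convex_Ici ζ1)
    · intro x hx
      exact (hh_der x (lt_of_lt_of_le hζ1pos hx)).continuousAt.continuousWithinAt
    · intro x hx
      rw [interior_Ici] at hx
      exact (hh_der x (lt_trans hζ1pos hx)).differentiableAt.differentiableWithinAt
    · intro x hx
      rw [interior_Ici] at hx
      have hx0 : 0 < x := lt_trans hζ1pos hx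
      rw [(hh_der x hx0).deriv]
      have hfx : 0 < f x := hf_pos x hx0
      have hFx : 0 < F x := hF_pos x hx0
      have hg : f x * F x ≤ c * x := hgbd x hx.le
      have hgpos : 0 < f x * F x := mul_pos hfx hFx
      have h1 : -(1 / f x) / F x = -(1 / (f x * F x)) := by
        field_simp
      rw [h1]
      have h2 : α * x⁻¹ = 1 / (c * x) := by
        rw [hα]; field_simp
      rw [h2]
      have h3 : 1 / (c * x) ≤ 1 / (f x * F x) :=
        one_div_le_one_div_of_le hgpos hg
      linarith
  -- conclude
  refine ⟨ζ1, hζ1pos, Real.exp (Real.log (F ζ1) + α * Real.log ζ1), Real.exp_pos _, ?_⟩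
  intro ξ hξ
  have hξ0 : 0 < ξ := lt_of_lt_of_le hζ1pos hξ
  have hh := hh_anti (Set.self_mem_Ici) (show ξ ∈ Set.Ici ζ1 from hξ) hξ
  simp only at hh
  have hFξ : 0 < F ξ := hF_pos ξ hξ0
  have hlog : Real.log (F ξ) ≤ Real.log (F ζ1) + α * Real.log ζ1 + (-α) * Real.log ξ := by
    linarith
  have : F ξ ≤ Real.exp (Real.log (F ζ1) + α * Real.log ζ1 + (-α) * Real.log ξ) := by
    calc F ξ = Real.exp (Real.log (F ξ)) := (Real.exp_log hFξ).symm
      _ ≤ _ := Real.exp_le_exp.mpr hlog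
  rw [Real.exp_add] at this
  have hrw : Real.exp ((-α) * Real.log ξ) = ξ ^ (-(1 / (q - 1 + ε))) := by
    rw [Real.rpow_def_of_pos hξ0, hα, hc]
    ring_nf
  rw [hrw] at this
  exact this
end

section
/- Let f ∈ S_q with q ∈ [1,∞), r > 0, and θ ∈ (0,1) satisfying (q−1)/r < θ < min{1, q/r}. Set H(ξ) = F(ξ)^{−r}. Then both ξ ↦ f(ξ)/H(ξ)^θ and ξ ↦ H'(ξ)/H(ξ)^{1−θ} are nondecreasing for all sufficiently large ξ > 0. -/
open MeasureTheory Filter Set Real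

/-- for f ∈ S_q, r > 0, θ ∈ (0,1) with (q-1)/r < θ < min{1, q/r}, setting
H(ξ) = F(ξ)^{-r}, both ξ ↦ f(ξ)/H(ξ)^θ and ξ ↦ H'(ξ)/H(ξ)^{1-θ}
(with H'(ξ) = r/(f(ξ)F(ξ)^{r+1})) are nondecreasing for large ξ. -/
theorem statement16 (f f' : ℝ → ℝ) (q : ℝ) (hq1 : 1 ≤ q)
    (r : ℝ) (hr : 0 < r) (θ : ℝ) (hθ : θ ∈ Set.Ioo (0:ℝ) 1)
    (hθ1 : (q - 1) / r < θ) (hθ2 : θ < min 1 (q / r))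
    (hf_cont : ContinuousOn f (Set.Ici 0))
    (hf_diff : ∀ x > 0, HasDerivAt f (f' x) x)
    (hf'_cont : ContinuousOn f' (Set.Ioi 0))
    (hf_pos : ∀ x > 0, 0 < f x)
    (hf'_nonneg : ∀ x > 0, 0 ≤ f' x)
    (F : ℝ → ℝ) (hF : ∀ u, F u = ∫ τ in Set.Ioi u, 1 / f τ)
    (hF_fin : ∀ u > 0, IntegrableOn (fun τ => 1 / f τ) (Set.Ioi u))
    (hq : Tendsto (fun ξ => f' ξ * F ξ) atTop (nhds q)) :
    ∃ R > 0,
      MonotoneOn (fun ξ => f ξ / (F ξ ^ (-r)) ^ θ) (Set.Ici R) ∧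
      MonotoneOn (fun ξ => (r / (f ξ * F ξ ^ (r + 1))) / (F ξ ^ (-r)) ^ (1 - θ))
        (Set.Ici R) := by
  obtain ⟨hθ0, hθlt1⟩ := hθ
  -- basic exponent inequalities
  have hrθq : r * θ < q := by
    have h := (lt_div_iff₀ hr).mp (lt_of_lt_of_le hθ2 (min_le_right _ _))
    linarith [h]
  have hqrθ : q < 1 + r * θ := by
    have h := (div_lt_iff₀ hr).mp hθ1
    linarith [h]
  -- positivity of F
  have hFpos : ∀ u > 0, 0 < F u := by
    intro u hu
    rw [hF u]
    refine (setIntegral_pos_iff_support_of_nonneg_ae ?_ (hF_fin u hu)).mpr ?_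
    · filter_upwards [ae_restrict_mem measurableSet_Ioi] with τ hτ
      exact le_of_lt (div_pos one_pos (hf_pos τ (lt_trans hu hτ)))
    · have hsub : Set.Ioi u ⊆ Function.support (fun τ => 1 / f τ) ∩ Set.Ioi u := by
        intro x hx
        refine ⟨?_, hx⟩
        simp only [Function.mem_support]
        exact ne_of_gt (div_pos one_pos (hf_pos x (lt_trans hu hx)))
      refine lt_of_lt_of_le ?_ (measure_mono hsub)
      rw [Real.volume_Ioi]
      simp
  -- continuity of 1/f on (0,∞)
  have hcont1f : ContinuousOn (fun τ => 1 / f τ) (Set.Ioi 0) := by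
    exact ContinuousOn.div continuousOn_const (hf_cont.mono Set.Ioi_subset_Ici_self)
      (fun x hx => (hf_pos x hx).ne')
  -- splitting lemma for F
  have hsplit : ∀ a b : ℝ, 0 < a → a ≤ b →
      F a = (∫ t in Set.Ioc a b, 1 / f t) + F b := by
    intro a b ha hab
    have h1 : IntegrableOn (fun τ => 1 / f τ) (Set.Ioc a b) :=
      (hF_fin a ha).mono_set Set.Ioc_subset_Ioi_self
    have h2 : IntegrableOn (fun τ => 1 / f τ) (Set.Ioi b) :=
      (hF_fin a ha).mono_set (Set.Ioi_subset_Ioi hab)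
    rw [hF a, hF b, ← Set.Ioc_union_Ioi_eq_Ioi hab,
      setIntegral_union Set.Ioc_disjoint_Ioi_same measurableSet_Ioi h1 h2]
  -- F as an interval integral from 1
  have hkey : ∀ u > 0, F u = F 1 - ∫ t in (1:ℝ)..u, 1 / f t := by
    intro u hu
    rcases le_total 1 u with h | h
    · have := hsplit 1 u one_pos h
      rw [intervalIntegral.integral_of_le h]
      linarith [this]
    · have := hsplit u 1 hu h
      rw [intervalIntegral.integral_symm, intervalIntegral.integral_of_le h]
      linarith [this]
  -- interval integrability
  have hII : ∀ u > 0, IntervalIntegrable (fun τ => 1 / f τ) volume 1 u := by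
    intro u hu
    rw [intervalIntegrable_iff]
    have hm : 0 < min 1 u := lt_min one_pos hu
    refine (hF_fin (min 1 u / 2) (by positivity)).mono_set ?_
    intro x hx
    exact Set.mem_Ioi.mpr (lt_trans (half_lt_self hm) hx.1)
  -- derivative of F
  have hFderiv : ∀ u > 0, HasDerivAt F (-(1 / f u)) u := by
    intro u hu
    have hd : HasDerivAt (fun v => ∫ t in (1:ℝ)..v, 1 / f t) (1 / f u) u :=
      intervalIntegral.integral_hasDerivAt_right (hII u hu)
        (hcont1f.stronglyMeasurableAtFilter isOpen_Ioi u hu)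
        (hcont1f.continuousAt (Ioi_mem_nhds hu))
    have hd2 : HasDerivAt (fun v => F 1 - ∫ t in (1:ℝ)..v, 1 / f t) (-(1 / f u)) u :=
      hd.const_sub (F 1)
    refine hd2.congr_of_eventuallyEq ?_
    filter_upwards [Ioi_mem_nhds hu] with v hv using hkey v hv
  -- choose R
  have h1 : ∀ᶠ ξ in atTop, r * θ < f' ξ * F ξ := hq.eventually (eventually_gt_nhds hrθq)
  have h2 : ∀ᶠ ξ in atTop, f' ξ * F ξ < 1 + r * θ := hq.eventually (eventually_lt_nhds hqrθ)
  obtain ⟨R0, hR0⟩ := eventually_atTop.mp (h1.and h2)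
  set R := max R0 1 with hRdef
  have hR1 : (1:ℝ) ≤ R := le_max_right _ _
  have hRpos : (0:ℝ) < R := lt_of_lt_of_le one_pos hR1
  have hmem : ∀ ξ ∈ Set.Ici R, 0 < ξ ∧ r * θ < f' ξ * F ξ ∧ f' ξ * F ξ < 1 + r * θ := by
    intro ξ hξ
    have hξR : R ≤ ξ := hξ
    have hξpos : 0 < ξ := lt_of_lt_of_le hRpos hξR
    have := hR0 ξ (le_trans (le_max_left _ _) hξR)
    exact ⟨hξpos, this.1, this.2⟩
  refine ⟨R, hRpos, ?_, ?_⟩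
  -- First function: f ξ * F ξ ^ (r θ)
  · have hg1At : ∀ ξ > 0, HasDerivAt (fun x => f x * F x ^ (r * θ))
        (f' ξ * F ξ ^ (r * θ) + f ξ * (-(1 / f ξ) * (r * θ) * F ξ ^ (r * θ - 1))) ξ := by
      intro ξ hξ
      exact (hf_diff ξ hξ).mul ((hFderiv ξ hξ).rpow_const (Or.inl (hFpos ξ hξ).ne'))
    have hmono : MonotoneOn (fun x => f x * F x ^ (r * θ)) (Set.Ici R) := by
      apply monotoneOn_of_deriv_nonneg (convex_Ici R)
      · intro x hx
        exact (hg1At x (hmem x hx).1).continuousAt.continuousWithinAt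
      · rw [interior_Ici]
        intro x hx
        exact (hg1At x (lt_trans hRpos hx)).differentiableAt.differentiableWithinAt
      · rw [interior_Ici]
        intro x hx
        have hxpos : 0 < x := lt_trans hRpos hx
        rw [(hg1At x hxpos).deriv]
        have hxm := hmem x (Set.mem_Ici.mpr (le_of_lt hx))
        have hFp : 0 < F x := hFpos x hxpos
        have hfp : 0 < f x := hf_pos x hxpos
        have hFe : F x ^ (r * θ) = F x ^ (r * θ - 1) * F x := by
          rw [show r * θ = (r * θ - 1) + 1 by ring, Real.rpow_add_one hFp.ne']
          ring_nf
        have hFp1 : 0 < F x ^ (r * θ - 1) := Real.rpow_pos_of_pos hFp _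
        have hb : r * θ ≤ f' x * F x := le_of_lt hxm.2.1
        have hrw : f' x * F x ^ (r * θ) + f x * (-(1 / f x) * (r * θ) * F x ^ (r * θ - 1))
            = (f' x * F x - r * θ) * F x ^ (r * θ - 1) := by
          rw [hFe]; field_simp; ring
        rw [hrw]
        exact mul_nonneg (sub_nonneg.mpr hb) hFp1.le
    intro x hx y hy hxy
    have hEq : ∀ ξ ∈ Set.Ici R, f ξ / (F ξ ^ (-r)) ^ θ = f ξ * F ξ ^ (r * θ) := by
      intro ξ hξ
      have hFp : 0 < F ξ := hFpos ξ (hmem ξ hξ).1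
      rw [← Real.rpow_mul hFp.le, show -r * θ = -(r * θ) by ring, Real.rpow_neg hFp.le,
        div_eq_mul_inv, inv_inv]
    simp only []
    rw [hEq x hx, hEq y hy]
    exact hmono hx hy hxy
  -- Second function: r / (f ξ * F ξ ^ (1 + r θ))
  · have hg2At : ∀ ξ > 0, HasDerivAt (fun x => f x * F x ^ (1 + r * θ))
        (f' ξ * F ξ ^ (1 + r * θ) + f ξ * (-(1 / f ξ) * (1 + r * θ) * F ξ ^ (1 + r * θ - 1))) ξ := by
      intro ξ hξ
      exact (hf_diff ξ hξ).mul ((hFderiv ξ hξ).rpow_const (Or.inl (hFpos ξ hξ).ne'))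
    have hanti : AntitoneOn (fun x => f x * F x ^ (1 + r * θ)) (Set.Ici R) := by
      apply antitoneOn_of_deriv_nonpos (convex_Ici R)
      · intro x hx
        exact (hg2At x (hmem x hx).1).continuousAt.continuousWithinAt
      · rw [interior_Ici]
        intro x hx
        exact (hg2At x (lt_trans hRpos hx)).differentiableAt.differentiableWithinAt
      · rw [interior_Ici]
        intro x hx
        have hxpos : 0 < x := lt_trans hRpos hx
        rw [(hg2At x hxpos).deriv]
        have hxm := hmem x (Set.mem_Ici.mpr (le_of_lt hx))
        have hFp : 0 < F x := hFpos x hxpos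
        have hfp : 0 < f x := hf_pos x hxpos
        have hFe : F x ^ (1 + r * θ) = F x ^ (1 + r * θ - 1) * F x := by
          rw [show 1 + r * θ = (1 + r * θ - 1) + 1 by ring, Real.rpow_add_one hFp.ne']
          ring_nf
        have hFp1 : 0 < F x ^ (1 + r * θ - 1) := Real.rpow_pos_of_pos hFp _
        have hb : f' x * F x ≤ 1 + r * θ := le_of_lt hxm.2.2
        have hrw : f' x * F x ^ (1 + r * θ) + f x * (-(1 / f x) * (1 + r * θ) * F x ^ (1 + r * θ - 1))
            = (f' x * F x - (1 + r * θ)) * F x ^ (1 + r * θ - 1) := by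
          rw [hFe]; field_simp; ring
        rw [hrw]
        exact mul_nonpos_of_nonpos_of_nonneg (sub_nonpos.mpr hb) hFp1.le
    intro x hx y hy hxy
    have hEq : ∀ ξ ∈ Set.Ici R, (r / (f ξ * F ξ ^ (r + 1))) / (F ξ ^ (-r)) ^ (1 - θ)
        = r / (f ξ * F ξ ^ (1 + r * θ)) := by
      intro ξ hξ
      have hFp : 0 < F ξ := hFpos ξ (hmem ξ hξ).1
      rw [← Real.rpow_mul hFp.le, div_div, mul_assoc, ← Real.rpow_add hFp,
        show (r + 1) + -r * (1 - θ) = 1 + r * θ by ring]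
    simp only []
    rw [hEq x hx, hEq y hy]
    have hle := hanti hx hy hxy
    have hpy : 0 < f y * F y ^ (1 + r * θ) := by
      have hypos : 0 < y := (hmem y hy).1
      exact mul_pos (hf_pos y hypos) (Real.rpow_pos_of_pos (hFpos y hypos) _)
    gcongr
end
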